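/- (Eq. (2) of the paper: the chained lower bound in Lemma 2's proof.) Let X, Y, Z, D, Θ be jointly distributed random variables with values in nonempty finite types, and suppose I(X;Y|(Θ,D,Z)) = 0, i.e. X and Y are conditionally independent given the joint variable (Θ,D,Z). Then for every strictly positive pmf r on the value space of Z, the following chain of inequalities holds: I(Y;D|Θ,Z) ≥ I(X;Y|Θ,Z) ≥ I(X;Y|Θ) − I(X;Z|Θ) ≥ I(X;Y|Θ) − Σ_{(x,θ): p(x,θ)>0} p(x,θ) · KL(P_{Z|X=x,Θ=θ} ‖ r). -/
import Mathlib


open Finset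

/-- Conditional mutual information `I(α;β|γ)` of a joint pmf `p` on `α × β × γ`,
with the convention `0·log 0 = 0` (automatic since `Real.log 0 = 0`). -/
noncomputable def condMI {α β γ : Type*} [Fintype α] [Fintype β] [Fintype γ]
    (p : α → β → γ → ℝ) : ℝ :=
  ∑ a, ∑ b, ∑ c, p a b c *
    Real.log (p a b c * (∑ a', ∑ b', p a' b' c) /
      ((∑ b', p a b' c) * (∑ a', p a' b c)))

/-- Kullback–Leibler divergence of pmfs on a finite type:
`KL(a‖b) = Σ_{t : a(t)>0} a(t) log (a(t)/b(t))`. -/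
noncomputable def KLdiv {τ : Type*} [Fintype τ] (a b : τ → ℝ) : ℝ :=
  ∑ t, if 0 < a t then a t * Real.log (a t / b t) else 0

lemma sum_pos_mem {ι : Type*} [Fintype ι] {f : ι → ℝ} (h : ∀ i, 0 ≤ f i) (i : ι)
    (hi : 0 < f i) : 0 < ∑ j, f j :=
  Finset.sum_pos' (fun j _ => h j) ⟨i, Finset.mem_univ i, hi⟩

lemma entropy_term_ge {a b : ℝ} (ha : 0 ≤ a) (hb : 0 ≤ b) (h : 0 < a → 0 < b) :
    a - b ≤ a * Real.log (a / b) := by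
  rcases eq_or_lt_of_le ha with h0 | ha'
  · simp [← h0]; exact hb
  · have hb' := h ha'
    have hlog : Real.log (b / a) ≤ b / a - 1 := Real.log_le_sub_one_of_pos (div_pos hb' ha')
    have hinv : Real.log (a / b) = - Real.log (b / a) := by
      rw [← Real.log_inv, inv_div]
    rw [hinv]
    have h2 : a * Real.log (b / a) ≤ a * (b / a - 1) :=
      mul_le_mul_of_nonneg_left hlog ha'.le
    have h3 : a * (b / a - 1) = b - a := by field_simp
    nlinarith

lemma gibbs {ι : Type*} [Fintype ι] (a b c : ι → ℝ) (ha : ∀ i, 0 ≤ a i)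
    (hb : ∀ i, 0 ≤ b i) (hc : ∀ i, 0 < a i → 0 < b i ∧ c i = a i / b i)
    (hsum : ∑ i, b i ≤ ∑ i, a i) : 0 ≤ ∑ i, a i * Real.log (c i) := by
  have key : ∀ i, a i - b i ≤ a i * Real.log (c i) := by
    intro i
    rcases eq_or_lt_of_le (ha i) with h0 | ha'
    · simp [← h0]; exact hb i
    · obtain ⟨hb', hc'⟩ := hc i ha'
      rw [hc']
      exact entropy_term_ge (ha i) (hb i) (fun _ => hb')
  calc (0:ℝ) ≤ ∑ i, (a i - b i) := by rw [Finset.sum_sub_distrib]; linarith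
    _ ≤ _ := Finset.sum_le_sum fun i _ => key i

lemma log4 {a b c d : ℝ} (ha : 0 < a) (hb : 0 < b) (hc : 0 < c) (hd : 0 < d) :
    Real.log (a * b / (c * d)) = Real.log a + Real.log b - Real.log c - Real.log d := by
  rw [Real.log_div (by positivity) (by positivity),
    Real.log_mul ha.ne' hb.ne', Real.log_mul hc.ne' hd.ne']
  ring

lemma sum3_rot {α β γ : Type*} [Fintype α] [Fintype β] [Fintype γ] (f : α → β → γ → ℝ) :
    ∑ a, ∑ b, ∑ c, f a b c = ∑ c, ∑ a, ∑ b, f a b c := by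
  rw [show (∑ a, ∑ b, ∑ c, f a b c) = ∑ a, ∑ c, ∑ b, f a b c from
    Finset.sum_congr rfl fun a _ => Finset.sum_comm, Finset.sum_comm]

lemma sum3_rot2 {α β γ : Type*} [Fintype α] [Fintype β] [Fintype γ] (f : α → β → γ → ℝ) :
    ∑ a, ∑ b, ∑ c, f a b c = ∑ b, ∑ c, ∑ a, f a b c :=
  (sum3_rot f).trans (sum3_rot fun c a b => f a b c)

lemma sum4_perm1 {A B C D : Type*} [Fintype A] [Fintype B] [Fintype C] [Fintype D]
    (g : A → B → C → D → ℝ) :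
    ∑ a, ∑ b, ∑ c, ∑ d, g a b c d = ∑ d, ∑ c, ∑ a, ∑ b, g a b c d :=
  calc ∑ a, ∑ b, ∑ c, ∑ d, g a b c d
      = ∑ a, ∑ d, ∑ b, ∑ c, g a b c d :=
        Finset.sum_congr rfl fun a _ => sum3_rot (fun b c d => g a b c d)
    _ = ∑ d, ∑ a, ∑ b, ∑ c, g a b c d := Finset.sum_comm
    _ = ∑ d, ∑ c, ∑ a, ∑ b, g a b c d := Finset.sum_congr rfl fun d _ => sum3_rot _

lemma sum4_perm2 {A B C D : Type*} [Fintype A] [Fintype B] [Fintype C] [Fintype D]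
    (g : A → B → C → D → ℝ) :
    ∑ a, ∑ b, ∑ c, ∑ d, g a b c d = ∑ c, ∑ b, ∑ a, ∑ d, g a b c d :=
  calc ∑ a, ∑ b, ∑ c, ∑ d, g a b c d
      = ∑ a, ∑ c, ∑ d, ∑ b, g a b c d :=
        Finset.sum_congr rfl fun a _ => sum3_rot2 (fun b c d => g a b c d)
    _ = ∑ c, ∑ a, ∑ d, ∑ b, g a b c d := Finset.sum_comm
    _ = ∑ c, ∑ b, ∑ a, ∑ d, g a b c d := Finset.sum_congr rfl fun c _ => sum3_rot _

lemma sum4_perm3 {A B C D : Type*} [Fintype A] [Fintype B] [Fintype C] [Fintype D]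
    (g : A → B → C → D → ℝ) :
    ∑ a, ∑ b, ∑ c, ∑ d, g a b c d = ∑ d, ∑ b, ∑ a, ∑ c, g a b c d :=
  calc ∑ a, ∑ b, ∑ c, ∑ d, g a b c d
      = ∑ a, ∑ d, ∑ b, ∑ c, g a b c d :=
        Finset.sum_congr rfl fun a _ => sum3_rot (fun b c d => g a b c d)
    _ = ∑ d, ∑ a, ∑ b, ∑ c, g a b c d := Finset.sum_comm
    _ = ∑ d, ∑ b, ∑ a, ∑ c, g a b c d := Finset.sum_congr rfl fun d _ => Finset.sum_comm

lemma sum5_perm {A B C D E : Type*} [Fintype A] [Fintype B] [Fintype C] [Fintype D]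
    [Fintype E] (g : A → B → C → D → E → ℝ) :
    ∑ a, ∑ b, ∑ c, ∑ d, ∑ e, g a b c d e = ∑ e, ∑ d, ∑ c, ∑ a, ∑ b, g a b c d e :=
  calc ∑ a, ∑ b, ∑ c, ∑ d, ∑ e, g a b c d e
      = ∑ a, ∑ b, ∑ e, ∑ c, ∑ d, g a b c d e :=
        Finset.sum_congr rfl fun a _ => Finset.sum_congr rfl fun b _ =>
          sum3_rot (fun c d e => g a b c d e)
    _ = ∑ e, ∑ a, ∑ b, ∑ c, ∑ d, g a b c d e :=
        sum3_rot (fun a b e => ∑ c, ∑ d, g a b c d e)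
    _ = ∑ e, ∑ d, ∑ c, ∑ a, ∑ b, g a b c d e :=
        Finset.sum_congr rfl fun e _ => sum4_perm1 (fun a b c d => g a b c d e)

lemma sum_prod_div {A B : Type*} [Fintype A] [Fintype B] (u : A → ℝ) (v : B → ℝ) (w : ℝ) :
    ∑ a, ∑ b, u a * v b / w = (∑ a, u a) * (∑ b, v b) / w := by
  simp only [mul_div_assoc, ← Finset.mul_sum]
  rw [← Finset.sum_mul, Finset.sum_div]

lemma ineq1 {X Y Z D Θ : Type*} [Fintype X] [Fintype Y] [Fintype Z] [Fintype D]
    [Fintype Θ] (q : X → Y → Z → D → Θ → ℝ)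
    (hq : ∀ x y z d θ, 0 ≤ q x y z d θ)
    (hzero : condMI (fun x y (w : Θ × D × Z) => q x y w.2.2 w.2.1 w.1) = 0) :
    condMI (fun x y (w : Θ × Z) => ∑ d, q x y w.2 d w.1)
      ≤ condMI (fun y d (w : Θ × Z) => ∑ x, q x y w.2 d w.1) := by
  rw [← sub_nonneg]
  have e1 : condMI (fun y d (w : Θ × Z) => ∑ x, q x y w.2 d w.1)
      = ∑ x, ∑ z, ∑ θ, ∑ y, ∑ d, q x y z d θ *
          Real.log ((∑ x', q x' y z d θ) * (∑ y', ∑ d', ∑ x', q x' y' z d' θ) /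
            ((∑ d', ∑ x', q x' y z d' θ) * (∑ y', ∑ x', q x' y' z d θ))) := by
    rw [condMI]
    simp only [Fintype.sum_prod_type]
    rw [show (∑ y, ∑ d, ∑ θ, ∑ z, (∑ x, q x y z d θ) *
          Real.log ((∑ x, q x y z d θ) * (∑ y', ∑ d', ∑ x, q x y' z d' θ) /
            ((∑ d', ∑ x, q x y z d' θ) * (∑ y', ∑ x, q x y' z d θ))))
        = ∑ y, ∑ d, ∑ θ, ∑ z, ∑ x, q x y z d θ *
          Real.log ((∑ x', q x' y z d θ) * (∑ y', ∑ d', ∑ x', q x' y' z d' θ) /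
            ((∑ d', ∑ x', q x' y z d' θ) * (∑ y', ∑ x', q x' y' z d θ))) from
      Finset.sum_congr rfl fun y _ => Finset.sum_congr rfl fun d _ =>
        Finset.sum_congr rfl fun θ _ => Finset.sum_congr rfl fun z _ =>
          Finset.sum_mul _ _ _]
    exact sum5_perm (fun y d θ z x => q x y z d θ *
      Real.log ((∑ x', q x' y z d θ) * (∑ y', ∑ d', ∑ x', q x' y' z d' θ) /
        ((∑ d', ∑ x', q x' y z d' θ) * (∑ y', ∑ x', q x' y' z d θ))))
  have e2 : condMI (fun x y (w : Θ × Z) => ∑ d, q x y w.2 d w.1)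
      = ∑ x, ∑ z, ∑ θ, ∑ y, ∑ d, q x y z d θ *
          Real.log ((∑ d', q x y z d' θ) * (∑ x', ∑ y', ∑ d', q x' y' z d' θ) /
            ((∑ y', ∑ d', q x y' z d' θ) * (∑ x', ∑ d', q x' y z d' θ))) := by
    rw [condMI]
    simp only [Fintype.sum_prod_type]
    rw [show (∑ x, ∑ y, ∑ θ, ∑ z, (∑ d, q x y z d θ) *
          Real.log ((∑ d, q x y z d θ) * (∑ x', ∑ y', ∑ d, q x' y' z d θ) /
            ((∑ y', ∑ d, q x y' z d θ) * (∑ x', ∑ d, q x' y z d θ))))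
        = ∑ x, ∑ y, ∑ θ, ∑ z, ∑ d, q x y z d θ *
          Real.log ((∑ d', q x y z d' θ) * (∑ x', ∑ y', ∑ d', q x' y' z d' θ) /
            ((∑ y', ∑ d', q x y' z d' θ) * (∑ x', ∑ d', q x' y z d' θ))) from
      Finset.sum_congr rfl fun x _ => Finset.sum_congr rfl fun y _ =>
        Finset.sum_congr rfl fun θ _ => Finset.sum_congr rfl fun z _ =>
          Finset.sum_mul _ _ _]
    exact Finset.sum_congr rfl fun x _ => sum4_perm2 (fun y θ z d => q x y z d θ *
      Real.log ((∑ d', q x y z d' θ) * (∑ x', ∑ y', ∑ d', q x' y' z d' θ) /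
        ((∑ y', ∑ d', q x y' z d' θ) * (∑ x', ∑ d', q x' y z d' θ))))
  have e3 : condMI (fun x y (w : Θ × D × Z) => q x y w.2.2 w.2.1 w.1)
      = ∑ x, ∑ z, ∑ θ, ∑ y, ∑ d, q x y z d θ *
          Real.log (q x y z d θ * (∑ x', ∑ y', q x' y' z d θ) /
            ((∑ y', q x y' z d θ) * (∑ x', q x' y z d θ))) := by
    rw [condMI]
    simp only [Fintype.sum_prod_type]
    exact Finset.sum_congr rfl fun x _ => sum4_perm3 (fun y θ d z => q x y z d θ *
      Real.log (q x y z d θ * (∑ x', ∑ y', q x' y' z d θ) /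
        ((∑ y', q x y' z d θ) * (∑ x', q x' y z d θ))))
  have h3 : (∑ x, ∑ z, ∑ θ, ∑ y, ∑ d, q x y z d θ *
          Real.log (q x y z d θ * (∑ x', ∑ y', q x' y' z d θ) /
            ((∑ y', q x y' z d θ) * (∑ x', q x' y z d θ)))) = 0 := by
    rw [← e3]; exact hzero
  have comb : (∑ x, ∑ z, ∑ θ, ∑ y, ∑ d, q x y z d θ *
          Real.log ((∑ x', q x' y z d θ) * (∑ y', ∑ d', ∑ x', q x' y' z d' θ) /
            ((∑ d', ∑ x', q x' y z d' θ) * (∑ y', ∑ x', q x' y' z d θ))))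
      - (∑ x, ∑ z, ∑ θ, ∑ y, ∑ d, q x y z d θ *
          Real.log ((∑ d', q x y z d' θ) * (∑ x', ∑ y', ∑ d', q x' y' z d' θ) /
            ((∑ y', ∑ d', q x y' z d' θ) * (∑ x', ∑ d', q x' y z d' θ))))
      + (∑ x, ∑ z, ∑ θ, ∑ y, ∑ d, q x y z d θ *
          Real.log (q x y z d θ * (∑ x', ∑ y', q x' y' z d θ) /
            ((∑ y', q x y' z d θ) * (∑ x', q x' y z d θ))))
      = ∑ x, ∑ z, ∑ θ, ∑ y, ∑ d, q x y z d θ *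
          Real.log (q x y z d θ * (∑ y', ∑ d', q x y' z d' θ) /
            ((∑ d', q x y z d' θ) * (∑ y', q x y' z d θ))) := by
    simp only [← Finset.sum_sub_distrib, ← Finset.sum_add_distrib]
    refine Finset.sum_congr rfl fun x _ => Finset.sum_congr rfl fun z _ =>
      Finset.sum_congr rfl fun θ _ => Finset.sum_congr rfl fun y _ =>
        Finset.sum_congr rfl fun d _ => ?_
    by_cases hq0 : 0 < q x y z d θ
    · have hxyz : 0 < ∑ d', q x y z d' θ := sum_pos_mem (fun d' => hq x y z d' θ) d hq0
      have hxdz : 0 < ∑ y', q x y' z d θ := sum_pos_mem (fun y' => hq x y' z d θ) y hq0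
      have hyd : 0 < ∑ x', q x' y z d θ := sum_pos_mem (fun x' => hq x' y z d θ) x hq0
      have hxz : 0 < ∑ y', ∑ d', q x y' z d' θ :=
        sum_pos_mem (fun y' => Finset.sum_nonneg fun d' _ => hq x y' z d' θ) y hxyz
      have hyz : 0 < ∑ d', ∑ x', q x' y z d' θ :=
        sum_pos_mem (fun d' => Finset.sum_nonneg fun x' _ => hq x' y z d' θ) d hyd
      have hdz : 0 < ∑ y', ∑ x', q x' y' z d θ :=
        sum_pos_mem (fun y' => Finset.sum_nonneg fun x' _ => hq x' y' z d θ) y hyd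
      have hz : 0 < ∑ y', ∑ d', ∑ x', q x' y' z d' θ :=
        sum_pos_mem (fun y' => Finset.sum_nonneg fun d' _ =>
          Finset.sum_nonneg fun x' _ => hq x' y' z d' θ) y hyz
      have cz : (∑ x', ∑ y', ∑ d', q x' y' z d' θ) = ∑ y', ∑ d', ∑ x', q x' y' z d' θ :=
        sum3_rot2 (fun x' y' d' => q x' y' z d' θ)
      have cyz : (∑ x', ∑ d', q x' y z d' θ) = ∑ d', ∑ x', q x' y z d' θ := Finset.sum_comm
      have cdz : (∑ x', ∑ y', q x' y' z d θ) = ∑ y', ∑ x', q x' y' z d θ := Finset.sum_comm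
      rw [cz, cyz, cdz]
      rw [log4 hyd hz hyz hdz, log4 hxyz hz hxz hyz, log4 hq0 hdz hxdz hyd,
        log4 hq0 hxz hxyz hxdz]
      ring
    · have h0 : q x y z d θ = 0 := le_antisymm (not_lt.mp hq0) (hq x y z d θ)
      rw [h0]; ring
  have hS : 0 ≤ ∑ x, ∑ z, ∑ θ, ∑ y, ∑ d, q x y z d θ *
      Real.log (q x y z d θ * (∑ y', ∑ d', q x y' z d' θ) /
        ((∑ d', q x y z d' θ) * (∑ y', q x y' z d θ))) := by
    refine Finset.sum_nonneg fun x _ => Finset.sum_nonneg fun z _ =>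
      Finset.sum_nonneg fun θ _ => ?_
    have hG := gibbs (ι := Y × D)
      (fun i => q x i.1 z i.2 θ)
      (fun i => if 0 < ∑ y', ∑ d', q x y' z d' θ then
          (∑ d', q x i.1 z d' θ) * (∑ y', q x y' z i.2 θ) / (∑ y', ∑ d', q x y' z d' θ)
        else 0)
      (fun i => q x i.1 z i.2 θ * (∑ y', ∑ d', q x y' z d' θ) /
          ((∑ d', q x i.1 z d' θ) * (∑ y', q x y' z i.2 θ)))
      (fun i => hq x i.1 z i.2 θ)
      (fun i => by
        split_ifs with h
        · exact div_nonneg (mul_nonneg (Finset.sum_nonneg fun d' _ => hq x i.1 z d' θ)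
            (Finset.sum_nonneg fun y' _ => hq x y' z i.2 θ)) h.le
        · exact le_refl 0)
      (by
        rintro ⟨y, d⟩ h0
        dsimp only at h0 ⊢
        have hxyz : 0 < ∑ d', q x y z d' θ := sum_pos_mem (fun d' => hq x y z d' θ) d h0
        have hxdz : 0 < ∑ y', q x y' z d θ := sum_pos_mem (fun y' => hq x y' z d θ) y h0
        have hxz : 0 < ∑ y', ∑ d', q x y' z d' θ :=
          sum_pos_mem (fun y' => Finset.sum_nonneg fun d' _ => hq x y' z d' θ) y hxyz
        rw [if_pos hxz]
        refine ⟨by positivity, ?_⟩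
        rw [div_div_eq_mul_div, mul_comm (q x y z d θ)])
      (by
        rw [Fintype.sum_prod_type, Fintype.sum_prod_type]
        by_cases hxz : 0 < ∑ y', ∑ d', q x y' z d' θ
        · simp only [if_pos hxz]
          rw [sum_prod_div (fun y => ∑ d', q x y z d' θ) (fun d => ∑ y', q x y' z d θ)]
          have c3 : (∑ d, ∑ y', q x y' z d θ) = ∑ y', ∑ d', q x y' z d' θ := Finset.sum_comm
          rw [c3, mul_div_assoc, div_self hxz.ne', mul_one]
        · simp only [if_neg hxz, Finset.sum_const_zero]
          exact Finset.sum_nonneg fun y _ => Finset.sum_nonneg fun d _ => hq x y z d θ)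
    rw [Fintype.sum_prod_type] at hG
    exact hG
  rw [e1, e2]
  linarith [comb, hS, h3]

lemma log3 {a b c : ℝ} (ha : 0 < a) (hb : 0 < b) (hc : 0 < c) :
    Real.log (a / (b * c)) = Real.log a - Real.log b - Real.log c := by
  rw [Real.log_div ha.ne' (by positivity), Real.log_mul hb.ne' hc.ne']
  ring



lemma ineq2 {X Y Z Θ : Type*} [Fintype X] [Fintype Y] [Fintype Z] [Fintype Θ]
    (q : X → Y → Z → Θ → ℝ) (hq : ∀ x y z θ, 0 ≤ q x y z θ) :
    condMI (fun x y θ => ∑ z, q x y z θ) - condMI (fun x z θ => ∑ y, q x y z θ)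
      ≤ condMI (fun x y (w : Θ × Z) => q x y w.2 w.1) := by
  rw [← sub_nonneg]
  -- the three expanded/reordered sums, all over (y, θ, x, z)
  have e1 : condMI (fun x y (w : Θ × Z) => q x y w.2 w.1)
      = ∑ y, ∑ θ, ∑ x, ∑ z, q x y z θ *
          Real.log (q x y z θ * (∑ x', ∑ y', q x' y' z θ) /
            ((∑ y', q x y' z θ) * (∑ x', q x' y z θ))) := by
    rw [condMI]
    simp only [Fintype.sum_prod_type]
    exact sum3_rot2 (fun x y θ => ∑ z, q x y z θ *
      Real.log (q x y z θ * (∑ x', ∑ y', q x' y' z θ) /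
        ((∑ y', q x y' z θ) * (∑ x', q x' y z θ))))
  have e2 : condMI (fun x y θ => ∑ z, q x y z θ)
      = ∑ y, ∑ θ, ∑ x, ∑ z, q x y z θ *
          Real.log ((∑ z', q x y z' θ) * (∑ x', ∑ y', ∑ z', q x' y' z' θ) /
            ((∑ y', ∑ z', q x y' z' θ) * (∑ x', ∑ z', q x' y z' θ))) := by
    rw [condMI]
    rw [show (∑ x, ∑ y, ∑ θ, (∑ z, q x y z θ) *
          Real.log ((∑ z, q x y z θ) * (∑ x', ∑ y', ∑ z, q x' y' z θ) /
            ((∑ y', ∑ z, q x y' z θ) * (∑ x', ∑ z, q x' y z θ))))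
        = ∑ x, ∑ y, ∑ θ, ∑ z, q x y z θ *
          Real.log ((∑ z', q x y z' θ) * (∑ x', ∑ y', ∑ z', q x' y' z' θ) /
            ((∑ y', ∑ z', q x y' z' θ) * (∑ x', ∑ z', q x' y z' θ))) from
      Finset.sum_congr rfl fun x _ => Finset.sum_congr rfl fun y _ =>
        Finset.sum_congr rfl fun θ _ => Finset.sum_mul _ _ _]
    exact sum3_rot2 (fun x y θ => ∑ z, q x y z θ *
      Real.log ((∑ z', q x y z' θ) * (∑ x', ∑ y', ∑ z', q x' y' z' θ) /
        ((∑ y', ∑ z', q x y' z' θ) * (∑ x', ∑ z', q x' y z' θ))))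
  have e3 : condMI (fun x z θ => ∑ y, q x y z θ)
      = ∑ y, ∑ θ, ∑ x, ∑ z, q x y z θ *
          Real.log ((∑ y', q x y' z θ) * (∑ x', ∑ z', ∑ y', q x' y' z' θ) /
            ((∑ z', ∑ y', q x y' z' θ) * (∑ x', ∑ y', q x' y' z θ))) := by
    rw [condMI]
    rw [show (∑ x, ∑ z, ∑ θ, (∑ y, q x y z θ) *
          Real.log ((∑ y, q x y z θ) * (∑ x', ∑ z', ∑ y, q x' y z' θ) /
            ((∑ z', ∑ y, q x y z' θ) * (∑ x', ∑ y, q x' y z θ))))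
        = ∑ x, ∑ z, ∑ θ, ∑ y, q x y z θ *
          Real.log ((∑ y', q x y' z θ) * (∑ x', ∑ z', ∑ y', q x' y' z' θ) /
            ((∑ z', ∑ y', q x y' z' θ) * (∑ x', ∑ y', q x' y' z θ))) from
      Finset.sum_congr rfl fun x _ => Finset.sum_congr rfl fun z _ =>
        Finset.sum_congr rfl fun θ _ => Finset.sum_mul _ _ _]
    exact sum4_perm1 (fun x z θ y => q x y z θ *
      Real.log ((∑ y', q x y' z θ) * (∑ x', ∑ z', ∑ y', q x' y' z' θ) /
        ((∑ z', ∑ y', q x y' z' θ) * (∑ x', ∑ y', q x' y' z θ))))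
  rw [e1, e2, e3]
  -- combine into one quadruple sum and identify the per-point term
  have comb : (∑ y, ∑ θ, ∑ x, ∑ z, q x y z θ *
          Real.log (q x y z θ * (∑ x', ∑ y', q x' y' z θ) /
            ((∑ y', q x y' z θ) * (∑ x', q x' y z θ))))
      - ((∑ y, ∑ θ, ∑ x, ∑ z, q x y z θ *
          Real.log ((∑ z', q x y z' θ) * (∑ x', ∑ y', ∑ z', q x' y' z' θ) /
            ((∑ y', ∑ z', q x y' z' θ) * (∑ x', ∑ z', q x' y z' θ))))
        - (∑ y, ∑ θ, ∑ x, ∑ z, q x y z θ *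
          Real.log ((∑ y', q x y' z θ) * (∑ x', ∑ z', ∑ y', q x' y' z' θ) /
            ((∑ z', ∑ y', q x y' z' θ) * (∑ x', ∑ y', q x' y' z θ)))))
      = ∑ y, ∑ θ, ∑ x, ∑ z, q x y z θ *
          Real.log (q x y z θ * (∑ x', ∑ z', q x' y z' θ) /
            ((∑ z', q x y z' θ) * (∑ x', q x' y z θ))) := by
    simp only [← Finset.sum_sub_distrib]
    refine Finset.sum_congr rfl fun y _ => Finset.sum_congr rfl fun θ _ =>
      Finset.sum_congr rfl fun x _ => Finset.sum_congr rfl fun z _ => ?_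
    by_cases hq0 : 0 < q x y z θ
    · have hpxy : 0 < ∑ z', q x y z' θ := sum_pos_mem (fun z' => hq x y z' θ) z hq0
      have hpxz : 0 < ∑ y', q x y' z θ := sum_pos_mem (fun y' => hq x y' z θ) y hq0
      have hpyz : 0 < ∑ x', q x' y z θ := sum_pos_mem (fun x' => hq x' y z θ) x hq0
      have hpz : 0 < ∑ x', ∑ y', q x' y' z θ :=
        sum_pos_mem (fun x' => Finset.sum_nonneg fun y' _ => hq x' y' z θ) x hpxz
      have hpx : 0 < ∑ y', ∑ z', q x y' z' θ :=
        sum_pos_mem (fun y' => Finset.sum_nonneg fun z' _ => hq x y' z' θ) y hpxy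
      have hpy : 0 < ∑ x', ∑ z', q x' y z' θ :=
        sum_pos_mem (fun x' => Finset.sum_nonneg fun z' _ => hq x' y z' θ) x hpxy
      have hpt : 0 < ∑ x', ∑ y', ∑ z', q x' y' z' θ :=
        sum_pos_mem (fun x' => Finset.sum_nonneg fun y' _ =>
          Finset.sum_nonneg fun z' _ => hq x' y' z' θ) x hpx
      -- normalize the differently-ordered marginals in e3's term
      have c1 : (∑ x', ∑ z', ∑ y', q x' y' z' θ) = ∑ x', ∑ y', ∑ z', q x' y' z' θ :=
        Finset.sum_congr rfl fun x' _ => Finset.sum_comm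
      have c2 : (∑ z', ∑ y', q x y' z' θ) = ∑ y', ∑ z', q x y' z' θ := Finset.sum_comm
      rw [c1, c2]
      rw [log4 hq0 hpz hpxz hpyz, log4 hpxy hpt hpx hpy, log4 hpxz hpt hpx hpz,
        log4 hq0 hpy hpxy hpyz]
      ring
    · have hz : q x y z θ = 0 := le_antisymm (not_lt.mp hq0) (hq x y z θ)
      rw [hz]; ring
  rw [comb]
  -- Gibbs per (y, θ)
  refine Finset.sum_nonneg fun y _ => Finset.sum_nonneg fun θ _ => ?_
  have hG := gibbs (ι := X × Z)
    (fun i => q i.1 y i.2 θ)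
    (fun i => if 0 < ∑ x', ∑ z', q x' y z' θ then
        (∑ z', q i.1 y z' θ) * (∑ x', q x' y i.2 θ) / (∑ x', ∑ z', q x' y z' θ) else 0)
    (fun i => q i.1 y i.2 θ * (∑ x', ∑ z', q x' y z' θ) /
        ((∑ z', q i.1 y z' θ) * (∑ x', q x' y i.2 θ)))
    (fun i => hq i.1 y i.2 θ)
    (fun i => by
      split_ifs with h
      · exact div_nonneg (mul_nonneg (Finset.sum_nonneg fun z' _ => hq i.1 y z' θ)
          (Finset.sum_nonneg fun x' _ => hq x' y i.2 θ)) h.le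
      · exact le_refl 0)
    (by
      rintro ⟨x, z⟩ h0
      dsimp only at h0 ⊢
      have hpxy : 0 < ∑ z', q x y z' θ := sum_pos_mem (fun z' => hq x y z' θ) z h0
      have hpyz : 0 < ∑ x', q x' y z θ := sum_pos_mem (fun x' => hq x' y z θ) x h0
      have hpy : 0 < ∑ x', ∑ z', q x' y z' θ :=
        sum_pos_mem (fun x' => Finset.sum_nonneg fun z' _ => hq x' y z' θ) x hpxy
      rw [if_pos hpy]
      refine ⟨by positivity, ?_⟩
      rw [div_div_eq_mul_div, mul_comm (q x y z θ)])
    (by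
      rw [Fintype.sum_prod_type, Fintype.sum_prod_type]
      by_cases hpy : 0 < ∑ x', ∑ z', q x' y z' θ
      · simp only [if_pos hpy]
        rw [sum_prod_div (fun x => ∑ z', q x y z' θ) (fun z => ∑ x', q x' y z θ)]
        have c3 : (∑ z, ∑ x', q x' y z θ) = ∑ x', ∑ z', q x' y z' θ := Finset.sum_comm
        rw [c3]
        rw [mul_div_assoc, div_self hpy.ne', mul_one]
      · simp only [if_neg hpy]
        simp only [Finset.sum_const_zero]
        exact Finset.sum_nonneg fun x _ => Finset.sum_nonneg fun z _ => hq x y z θ)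
  rw [Fintype.sum_prod_type] at hG
  exact hG

lemma ineq3 {X Z Θ : Type*} [Fintype X] [Fintype Z] [Fintype Θ]
    (q : X → Z → Θ → ℝ) (m : X → Θ → ℝ) (hm : ∀ x θ, m x θ = ∑ z, q x z θ)
    (hq : ∀ x z θ, 0 ≤ q x z θ) (r : Z → ℝ) (hr : ∀ z, 0 < r z) (hrs : ∑ z, r z = 1) :
    condMI q ≤ ∑ x, ∑ θ,
      (if 0 < m x θ then m x θ * KLdiv (fun z => q x z θ / m x θ) r else 0) := by
  -- Step A: rewrite RHS as triple sum
  have hA : ∀ x θ, (if 0 < m x θ then m x θ * KLdiv (fun z => q x z θ / m x θ) r else 0)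
      = ∑ z, (if 0 < q x z θ then q x z θ * Real.log (q x z θ / (m x θ * r z)) else 0) := by
    intro x θ
    by_cases hm0 : 0 < m x θ
    · rw [if_pos hm0, KLdiv, Finset.mul_sum]
      refine Finset.sum_congr rfl fun z _ => ?_
      rw [mul_ite, mul_zero]
      have hiff : (0 < q x z θ / m x θ) ↔ (0 < q x z θ) := by
        constructor
        · intro h
          by_contra hq0
          have : q x z θ = 0 := le_antisymm (not_lt.mp hq0) (hq x z θ)
          rw [this, zero_div] at h; exact lt_irrefl 0 h
        · intro h; exact div_pos h hm0
      by_cases hq0 : 0 < q x z θ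
      · rw [if_pos (hiff.mpr hq0), if_pos hq0, div_div]
        field_simp
      · rw [if_neg (fun h => hq0 (hiff.mp h)), if_neg hq0]
    · rw [if_neg hm0]
      have hmz : m x θ = 0 := le_antisymm (not_lt.mp hm0)
        (by rw [hm]; exact Finset.sum_nonneg fun z _ => hq x z θ)
      have hq0 : ∀ z, q x z θ = 0 := by
        intro z
        have := hmz
        rw [hm] at this
        have h2 := (Finset.sum_eq_zero_iff_of_nonneg (fun z _ => hq x z θ)).mp this
        exact h2 z (Finset.mem_univ z)
      symm
      refine Finset.sum_eq_zero fun z _ => ?_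
      rw [if_neg]; rw [hq0 z]; exact lt_irrefl 0
  -- the difference sum
  rw [← sub_nonneg]
  have hB : (∑ x, ∑ θ, (if 0 < m x θ then m x θ * KLdiv (fun z => q x z θ / m x θ) r else 0))
      - condMI q
      = ∑ x, ∑ z, ∑ θ, q x z θ *
          Real.log ((∑ x', q x' z θ) / ((∑ x', ∑ z', q x' z' θ) * r z)) := by
    rw [condMI]
    have h1 : (∑ x, ∑ θ, (if 0 < m x θ then m x θ * KLdiv (fun z => q x z θ / m x θ) r else 0))
        = ∑ x, ∑ z, ∑ θ, (if 0 < q x z θ then q x z θ * Real.log (q x z θ / (m x θ * r z)) else 0) := by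
      refine Finset.sum_congr rfl fun x _ => ?_
      rw [show (∑ θ, if 0 < m x θ then m x θ * KLdiv (fun z => q x z θ / m x θ) r else 0)
          = ∑ θ, ∑ z, (if 0 < q x z θ then q x z θ * Real.log (q x z θ / (m x θ * r z)) else 0)
          from Finset.sum_congr rfl fun θ _ => hA x θ]
      exact Finset.sum_comm
    rw [h1, ← Finset.sum_sub_distrib]
    refine Finset.sum_congr rfl fun x _ => ?_
    rw [← Finset.sum_sub_distrib]
    refine Finset.sum_congr rfl fun z _ => ?_
    rw [← Finset.sum_sub_distrib]
    refine Finset.sum_congr rfl fun θ _ => ?_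
    by_cases hq0 : 0 < q x z θ
    · rw [if_pos hq0]
      have hpx : 0 < ∑ z', q x z' θ := sum_pos_mem (fun z' => hq x z' θ) z hq0
      have hpz : 0 < ∑ x', q x' z θ := sum_pos_mem (fun x' => hq x' z θ) x hq0
      have hpt : 0 < ∑ x', ∑ z', q x' z' θ :=
        sum_pos_mem (fun x' => Finset.sum_nonneg fun z' _ => hq x' z' θ) x hpx
      have hm0 : 0 < m x θ := by rw [hm]; exact hpx
      rw [log3 hq0 hm0 (hr z), log4 hq0 hpt (by rw [← hm] at hpx ⊢; exact hm0) hpz,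
        log3 hpz hpt (hr z)]
      · rw [hm]
        ring
    · have : q x z θ = 0 := le_antisymm (not_lt.mp hq0) (hq x z θ)
      rw [if_neg hq0, this]; ring
  rw [hB]
  -- Step D: collapse x and apply gibbs over Z × Θ
  have hC : (∑ x, ∑ z, ∑ θ, q x z θ *
        Real.log ((∑ x', q x' z θ) / ((∑ x', ∑ z', q x' z' θ) * r z)))
      = ∑ z, ∑ θ, (∑ x, q x z θ) *
          Real.log ((∑ x', q x' z θ) / ((∑ x', ∑ z', q x' z' θ) * r z)) := by
    rw [Finset.sum_comm]
    refine Finset.sum_congr rfl fun z _ => ?_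
    rw [Finset.sum_comm, Finset.sum_congr rfl fun θ _ => (Finset.sum_mul _ _ _).symm]
  rw [hC]
  have hG := gibbs (fun i : Z × Θ => ∑ x, q x i.1 i.2)
    (fun i : Z × Θ => (∑ x', ∑ z', q x' z' i.2) * r i.1)
    (fun i : Z × Θ => (∑ x', q x' i.1 i.2) / ((∑ x', ∑ z', q x' z' i.2) * r i.1))
    (fun i => Finset.sum_nonneg fun x _ => hq x i.1 i.2)
    (fun i => mul_nonneg (Finset.sum_nonneg fun x' _ =>
        Finset.sum_nonneg fun z' _ => hq x' z' i.2) (hr i.1).le)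
    (by
      rintro ⟨z, θ⟩ hpos
      obtain ⟨x, -, hx⟩ := Finset.exists_lt_of_sum_lt (by simpa using hpos : ∑ x : X, (0:ℝ) < ∑ x, q x z θ)
      have hpt : 0 < ∑ x', ∑ z', q x' z' θ :=
        sum_pos_mem (fun x' => Finset.sum_nonneg fun z' _ => hq x' z' θ) x
          (sum_pos_mem (fun z' => hq x z' θ) z hx)
      exact ⟨mul_pos hpt (hr z), rfl⟩)
    (by
      rw [Fintype.sum_prod_type, Fintype.sum_prod_type]
      have : ∀ z : Z, (∑ θ, (∑ x', ∑ z', q x' z' θ) * r z) = (∑ θ, ∑ x', ∑ z', q x' z' θ) * r z := by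
        intro z; rw [Finset.sum_mul]
      calc (∑ z, ∑ θ, (∑ x', ∑ z', q x' z' θ) * r z)
          = ∑ z, (∑ θ, ∑ x', ∑ z', q x' z' θ) * r z := Finset.sum_congr rfl fun z _ => this z
        _ = (∑ θ, ∑ x', ∑ z', q x' z' θ) * ∑ z, r z := by rw [Finset.mul_sum]
        _ = ∑ θ, ∑ x', ∑ z', q x' z' θ := by rw [hrs, mul_one]
        _ = ∑ z, ∑ θ, ∑ x, q x z θ := sum3_rot (fun θ x z => q x z θ)
        _ ≤ _ := le_refl _)
  rw [Fintype.sum_prod_type] at hG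
  exact hG

/-- Eq. (2) of the paper: the chained lower bound in
Lemma 2's proof. For jointly distributed `X, Y, Z, D, Θ` with
`I(X;Y|(Θ,D,Z)) = 0` and any strictly positive pmf `r` on the value space
of `Z`:
`I(Y;D|Θ,Z) ≥ I(X;Y|Θ,Z) ≥ I(X;Y|Θ) − I(X;Z|Θ)
  ≥ I(X;Y|Θ) − Σ_{(x,θ): p(x,θ)>0} p(x,θ)·KL(P_{Z|X=x,Θ=θ} ‖ r)`. -/
theorem chained_lower_bound
    {X Y Z D Θ : Type*} [Fintype X] [Fintype Y] [Fintype Z] [Fintype D]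
    [Fintype Θ] [Nonempty X] [Nonempty Y] [Nonempty Z] [Nonempty D] [Nonempty Θ]
    (p : X → Y → Z → D → Θ → ℝ)
    (hnn : ∀ x y z d θ, 0 ≤ p x y z d θ)
    (hsum : ∑ x, ∑ y, ∑ z, ∑ d, ∑ θ, p x y z d θ = 1)
    (hzero : condMI (fun x y (w : Θ × D × Z) => p x y w.2.2 w.2.1 w.1) = 0)
    (r : Z → ℝ)
    (hr_pos : ∀ z, 0 < r z)
    (hr_sum : ∑ z, r z = 1) :
    condMI (fun y d (w : Θ × Z) => ∑ x, p x y w.2 d w.1) ≥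
        condMI (fun x y (w : Θ × Z) => ∑ d, p x y w.2 d w.1) ∧
    condMI (fun x y (w : Θ × Z) => ∑ d, p x y w.2 d w.1) ≥
        condMI (fun x y θ => ∑ z, ∑ d, p x y z d θ) -
          condMI (fun x z θ => ∑ y, ∑ d, p x y z d θ) ∧
    condMI (fun x y θ => ∑ z, ∑ d, p x y z d θ) -
        condMI (fun x z θ => ∑ y, ∑ d, p x y z d θ) ≥
      condMI (fun x y θ => ∑ z, ∑ d, p x y z d θ) -
        ∑ x, ∑ θ,
          (if 0 < (∑ y, ∑ z, ∑ d, p x y z d θ) then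
            (∑ y, ∑ z, ∑ d, p x y z d θ) *
              KLdiv
                (fun z => (∑ y, ∑ d, p x y z d θ) /
                  (∑ y, ∑ z', ∑ d, p x y z' d θ))
                r
          else 0) := by
  refine ⟨?_, ?_, ?_⟩
  · exact ineq1 p hnn hzero
  · exact ineq2 (fun x y z θ => ∑ d, p x y z d θ)
      (fun x y z θ => Finset.sum_nonneg fun d _ => hnn x y z d θ)
  · refine sub_le_sub_left ?_ _
    exact ineq3 (fun x z θ => ∑ y, ∑ d, p x y z d θ)
      (fun x θ => ∑ y, ∑ z, ∑ d, p x y z d θ)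
      (fun x θ => Finset.sum_comm)
      (fun x z θ => Finset.sum_nonneg fun y _ => Finset.sum_nonneg fun d _ => hnn x y z d θ)
      r hr_pos hr_sum
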